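/- The number of dispersed Dyck paths of length n equals the central binomial coefficient C(n, ⌊n/2⌋). -/

import Mathlib

inductive DStep | up | down | right
deriving DecidableEq, Repr

instance : Fintype DStep :=
  ⟨{DStep.up, DStep.down, DStep.right}, fun x => by cases x <;> simp⟩

/-- Run a dispersed Dyck path from height `h`; `none` if an illegal step occurs,
otherwise the final height. Down steps require positive height; right steps require height 0. -/
def DStep.run : ℕ → List DStep → Option ℕ
  | h, [] => some h
  | h, .up :: l => DStep.run (h + 1) l
  | h + 1, .down :: l => DStep.run h l
  | 0, .down :: _ => none
  | 0, .right :: l => DStep.run 0 l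
  | _ + 1, .right :: _ => none

/-- A dispersed Dyck path: starts and ends at height 0, all steps legal. -/
def IsDDP (l : List DStep) : Prop := DStep.run 0 l = some 0

instance : DecidablePred IsDDP := fun l => by unfold IsDDP; infer_instance

/-- The finset of all dispersed Dyck paths of length `n`. -/
def DDPs (n : ℕ) : Finset (List.Vector DStep n) :=
  Finset.univ.filter (fun v => IsDDP v.toList)

/-- Number of dispersed Dyck paths of length `n`. -/
def dD (n : ℕ) : ℕ := (DDPs n).card

/-- Total number of up steps over all DDPs of length `n`. -/
def U (n : ℕ) : ℕ := ∑ v ∈ DDPs n, v.toList.count DStep.up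

/-- Total number of down steps over all DDPs of length `n`. -/
def D (n : ℕ) : ℕ := ∑ v ∈ DDPs n, v.toList.count DStep.down

/-- Total number of right steps over all DDPs of length `n`. -/
def R (n : ℕ) : ℕ := ∑ v ∈ DDPs n, v.toList.count DStep.right

/-- `i` is the position of a 1-ascent in `l`: an up step with no adjacent up step. -/
def IsOneAscentAt (l : List DStep) (i : ℕ) : Prop :=
  l[i]? = some .up ∧ l[i + 1]? ≠ some .up ∧ (i = 0 ∨ l[i - 1]? ≠ some .up)

instance (l : List DStep) : DecidablePred (IsOneAscentAt l) := fun i => by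
  unfold IsOneAscentAt; infer_instance

/-- Number of 1-ascents in `l`. -/
def oneAsc (l : List DStep) : ℕ :=
  ((Finset.range l.length).filter (IsOneAscentAt l)).card

/-- Total number of 1-ascents over all DDPs of length `n`. -/
def A (n : ℕ) : ℕ := ∑ v ∈ DDPs n, oneAsc v.toList

/-- Signed final height of a plain path (ignoring any right steps). -/
def psum : List DStep → ℤ
  | [] => 0
  | .up :: l => 1 + psum l
  | .down :: l => -1 + psum l
  | .right :: l => psum l


/-! Let `f n h` count the legal step sequences of length `n` leading from height `h` to `0`.
Removing the first step gives the recurrences `f (n+1) (h+1) = f n (h+2) + f n h` and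
`f (n+1) 0 = f n 1 + f n 0`, where a right step at height `0` plays the role of a down step to
the mirror height `-1`. Both are Pascal's rule for `f n h = C(n, ⌊(n+h+1)/2⌋)`, the second one
after the symmetry `C(n, ⌈n/2⌉) = C(n, ⌊n/2⌋)`. -/

theorem Nat.choose_succ_div_two (n : ℕ) : n.choose ((n + 1) / 2) = n.choose (n / 2) :=
  Nat.choose_symm_of_eq_add (by omega)

theorem List.Vector.card_filter_succ {α : Type*} [Fintype α] [DecidableEq α]
    (p : List α → Prop) [DecidablePred p] (n : ℕ) :
    (Finset.univ.filter fun v : List.Vector α (n + 1) => p v.toList).card =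
      ∑ a, (Finset.univ.filter fun v : List.Vector α n => p (a :: v.toList)).card := by
  rw [Finset.card_eq_sum_card_fiberwise (f := List.Vector.head) (t := Finset.univ)
    fun _ _ => Finset.mem_univ _]
  refine Finset.sum_congr rfl fun a _ => ?_
  refine Finset.card_nbij' List.Vector.tail (a ::ᵥ ·) ?_ ?_ ?_ ?_
  · intro v hv
    obtain ⟨hv, rfl⟩ := Finset.mem_filter.1 hv
    simpa [← List.Vector.toList_cons] using hv
  · intro w hw
    simp_all
  · intro v hv
    obtain ⟨-, rfl⟩ := Finset.mem_filter.1 hv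
    exact List.Vector.cons_head_tail v
  · intro w _
    exact List.Vector.tail_cons _ _

theorem DStep.sum_univ {M : Type*} [AddCommMonoid M] (f : DStep → M) :
    ∑ s, f s = f .up + f .down + f .right := by
  change ∑ s ∈ {DStep.up, DStep.down, DStep.right}, f s = _
  rw [Finset.sum_insert (by decide), Finset.sum_pair (by decide), add_assoc]

def numPathsFrom (n h : ℕ) : ℕ :=
  (Finset.univ.filter fun v : List.Vector DStep n => DStep.run h v.toList = some 0).card

theorem numPathsFrom_zero (h : ℕ) : numPathsFrom 0 h = if h = 0 then 1 else 0 := by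
  cases h <;> simp [numPathsFrom, List.Vector.eq_nil, DStep.run]

theorem numPathsFrom_succ_zero (n : ℕ) :
    numPathsFrom (n + 1) 0 = numPathsFrom n 1 + numPathsFrom n 0 := by
  rw [numPathsFrom, List.Vector.card_filter_succ (DStep.run _ · = some 0), DStep.sum_univ]
  simp only [DStep.run, reduceCtorEq, Finset.filter_false, Finset.card_empty, add_zero]
  rfl

theorem numPathsFrom_succ_succ (n h : ℕ) :
    numPathsFrom (n + 1) (h + 1) = numPathsFrom n (h + 2) + numPathsFrom n h := by
  rw [numPathsFrom, List.Vector.card_filter_succ (DStep.run _ · = some 0), DStep.sum_univ]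
  simp only [DStep.run, reduceCtorEq, Finset.filter_false, Finset.card_empty, add_zero]
  rfl

theorem numPathsFrom_eq_choose (n h : ℕ) : numPathsFrom n h = n.choose ((n + h + 1) / 2) := by
  induction n generalizing h with
  | zero =>
    rw [numPathsFrom_zero]
    cases h with
    | zero => rfl
    | succ h => exact (Nat.choose_eq_zero_of_lt (by omega)).symm
  | succ n ih =>
    cases h with
    | zero =>
      rw [numPathsFrom_succ_zero, ih, ih, Nat.add_zero, Nat.choose_succ_div_two,
        show (n + 1 + 1) / 2 = n / 2 + 1 by omega, Nat.choose_succ_succ', add_comm]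
    | succ h =>
      rw [numPathsFrom_succ_succ, ih, ih,
        show (n + 1 + (h + 1) + 1) / 2 = (n + h + 1) / 2 + 1 by omega,
        show (n + (h + 2) + 1) / 2 = (n + h + 1) / 2 + 1 by omega, Nat.choose_succ_succ', add_comm]

/-- The number of dispersed Dyck paths of length `n` is the central binomial
coefficient `C(n, ⌊n/2⌋)`. -/
theorem dD_eq_centralBinom (n : ℕ) : dD n = n.choose (n / 2) := by
  rw [← Nat.choose_succ_div_two]
  exact numPathsFrom_eq_choose n 0
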